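/- arXiv:2005.02014 — 6 statements merged into one kernel-verified Lean document; each statement's English description precedes it below -/
import Mathlib

section
/- With notation as in the decomposition α = s·(k♭ ∧ l♭) + k♭ ∧ β + l♭ ∧ β' + γ of an alternating 2-form, the condition k♭ ∧ α = 0 holds if and only if β' = 0 and γ = 0, i.e. α = k♭ ∧ (s·l♭ + β) for some scalar s and transversal 1-form β. -/
/-!
Contracting the condition `k♭ ∧ α = 0` with `l`, where `k♭(l) = 1`, shows that the
alternating form `α` equals `k♭ ∧ ι_l α`, and the decomposition gives `ι_l α = s·l♭ + β`.
Comparing with the decomposition leaves `l♭ ∧ β' + γ = 0`; contracting this with `k`, where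
`l♭(k) = 1` while `β'` and `γ` vanish on `k`, gives `β' = 0` and then `γ = 0`.
-/

namespace LinearMap

variable {R V : Type*} [CommRing R] [AddCommGroup V] [Module R V]

def wedge (φ ψ : V →ₗ[R] R) : V →ₗ[R] V →ₗ[R] R :=
  φ.smulRight ψ - ψ.smulRight φ

@[simp]
theorem wedge_apply (φ ψ : V →ₗ[R] R) (v w : V) :
    wedge φ ψ v w = φ v * ψ w - φ w * ψ v := by
  simp [wedge, mul_comm]

theorem wedge_cyclic_sum_eq_zero (φ ψ : V →ₗ[R] R) (u v w : V) :
    φ u * wedge φ ψ v w + φ v * wedge φ ψ w u + φ w * wedge φ ψ u v = 0 := by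
  simp only [wedge_apply]
  ring

theorem eq_wedge_of_cyclic_sum_eq_zero {α : V →ₗ[R] V →ₗ[R] R} (hα : α.IsAlt)
    {φ : V →ₗ[R] R} {l : V} (hφl : φ l = 1)
    (h : ∀ u v w, φ u * α v w + φ v * α w u + φ w * α u v = 0) :
    α = wedge φ (α l) := by
  ext v w
  have hcontr := h l v w
  rw [hφl, ← hα.neg l w] at hcontr
  rw [wedge_apply]
  linear_combination hcontr

theorem eq_zero_of_wedge_add_eq_zero {φ ψ : V →ₗ[R] R} {γ : V →ₗ[R] V →ₗ[R] R} {k : V}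
    (hφk : φ k = 1) (hψk : ψ k = 0) (hγk : ∀ v, γ k v = 0) (h : wedge φ ψ + γ = 0) :
    ψ = 0 ∧ γ = 0 := by
  have hψ : ψ = 0 := by
    ext w
    simpa [hφk, hψk, hγk] using congr($h k w)
  refine ⟨hψ, ?_⟩
  ext v w
  simpa [hψ] using congr($h v w)

end LinearMap

open LinearMap in
theorem stmt_3_general {V : Type*} [AddCommGroup V] [Module ℝ V]
    (g : V →ₗ[ℝ] V →ₗ[ℝ] ℝ)
    (hsymm : ∀ x y : V, g x y = g y x)
    (k l : V) (hl : g l l = 0) (hkl : g k l = 1)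
    (α : V →ₗ[ℝ] V →ₗ[ℝ] ℝ) (halt : ∀ v : V, α v v = 0)
    (s : ℝ) (β β' : V →ₗ[ℝ] ℝ) (γ : V →ₗ[ℝ] V →ₗ[ℝ] ℝ)
    (hβ : β k = 0 ∧ β l = 0) (hβ' : β' k = 0 ∧ β' l = 0)
    (hγtr : ∀ v : V, γ k v = 0 ∧ γ v k = 0 ∧ γ l v = 0 ∧ γ v l = 0)
    (hdec : ∀ v w : V, α v w =
      s * (g k v * g l w - g k w * g l v) +
      (g k v * β w - g k w * β v) +
      (g l v * β' w - g l w * β' v) +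
      γ v w) :
    (∀ u v w : V, g k u * α v w + g k v * α w u + g k w * α u v = 0) ↔
      (β' = 0 ∧ γ = 0) := by
  have hα : α = wedge (g k) (s • g l + β) + (wedge (g l) β' + γ) := by
    ext v w
    simp only [hdec, LinearMap.add_apply, wedge_apply, LinearMap.smul_apply, smul_eq_mul]
    ring
  constructor
  · intro h
    have hαl : α l = s • g l + β := by
      ext v
      simp [hdec, hl, hkl, hβ.2, hβ'.2, (hγtr v).2.2.1]
    rw [eq_wedge_of_cyclic_sum_eq_zero halt hkl h, hαl] at hα
    exact eq_zero_of_wedge_add_eq_zero (hsymm l k ▸ hkl) hβ'.1 (fun v => (hγtr v).1)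
      ((eq_neg_add_of_add_eq hα.symm).trans (neg_add_cancel _))
  · rintro ⟨rfl, rfl⟩ u v w
    simpa [hα] using wedge_cyclic_sum_eq_zero (g k) (s • g l + β) u v w

/-- With the decomposition `α = s·(k♭∧l♭) + k♭∧β + l♭∧β' + γ`, the condition
`k♭ ∧ α = 0` holds iff `β' = 0` and `γ = 0`, i.e. `α = k♭ ∧ (s·l♭ + β)`. -/
theorem stmt_3 {V : Type*} [AddCommGroup V] [Module ℝ V] [FiniteDimensional ℝ V]
    (hdim : 4 ≤ Module.finrank ℝ V)
    (g : V →ₗ[ℝ] V →ₗ[ℝ] ℝ)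
    (hsymm : ∀ x y : V, g x y = g y x)
    (hnd : ∀ v : V, (∀ w : V, g v w = 0) → v = 0)
    (k l : V) (hk : g k k = 0) (hl : g l l = 0) (hkl : g k l = 1)
    (α : V →ₗ[ℝ] V →ₗ[ℝ] ℝ) (halt : ∀ v : V, α v v = 0)
    (s : ℝ) (β β' : V →ₗ[ℝ] ℝ) (γ : V →ₗ[ℝ] V →ₗ[ℝ] ℝ)
    (hβ : β k = 0 ∧ β l = 0) (hβ' : β' k = 0 ∧ β' l = 0)
    (hγalt : ∀ v : V, γ v v = 0)
    (hγtr : ∀ v : V, γ k v = 0 ∧ γ v k = 0 ∧ γ l v = 0 ∧ γ v l = 0)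
    (hdec : ∀ v w : V, α v w =
      s * (g k v * g l w - g k w * g l v) +
      (g k v * β w - g k w * β v) +
      (g l v * β' w - g l w * β' v) +
      γ v w) :
    (∀ u v w : V, g k u * α v w + g k v * α w u + g k w * α u v = 0) ↔
      (β' = 0 ∧ γ = 0) :=
  stmt_3_general g hsymm k l hl hkl α halt s β β' γ hβ hβ' hγtr hdec
end

section
/- Let α be an alternating 2-form on V satisfying both k♭ ∧ α = 0 and α(k, ·) = 0, where k is lightlike for the nondegenerate symmetric bilinear form g. Then α = k♭ ∧ β for a transversal 1-form β, and the full contraction of α with itself using g vanishes: α_{μν} α^{μν} = 0. -/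
/-!
Contracting `k♭ ∧ α = 0` with `l` and using `g(k, l) = 1` gives `α = k♭ ∧ β` for `β = l ⌟ α`;
`β` annihilates `k` because `α(k, ·) = 0`, and annihilates `l` because `α` is skew.
For a decomposable form `a ∧ b` the full contraction is `2 (|a|² |b|² - ⟨a, b⟩²)`, and here
both `|k♭|² = g(k, k)` and `⟨k♭, β⟩ = β(k)` vanish.
-/

open Matrix

namespace Matrix

variable {ι R : Type*} [Fintype ι] [CommRing R]

theorem mulVec_eq_neg_vecMul {α : Matrix ι ι R} (hα : αᵀ = -α) (v : ι → R) :
    α *ᵥ v = -(v ᵥ* α) := by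
  rw [← mulVec_transpose, hα, neg_mulVec, neg_neg]

theorem vecMul_dotProduct_self_eq_zero [NoZeroDivisors R] [CharZero R] {α : Matrix ι ι R}
    (hα : αᵀ = -α) (v : ι → R) : v ᵥ* α ⬝ᵥ v = 0 := by
  have h : v ᵥ* α ⬝ᵥ v = -(v ᵥ* α ⬝ᵥ v) :=
    calc v ᵥ* α ⬝ᵥ v = v ⬝ᵥ α *ᵥ v := (dotProduct_mulVec _ _ _).symm
      _ = -(v ᵥ* α ⬝ᵥ v) := by rw [mulVec_eq_neg_vecMul hα, dotProduct_neg, dotProduct_comm]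
  exact CharZero.eq_neg_self_iff.mp h

theorem eq_wedge_of_cyclic_sum_eq_zero {α : Matrix ι ι R} (hα : αᵀ = -α) {a l : ι → R}
    (hcyc : ∀ i j k, a i * α j k + a j * α k i + a k * α i j = 0) (hla : l ⬝ᵥ a = 1) (i j : ι) :
    α i j = a i * (l ᵥ* α) j - a j * (l ᵥ* α) i := by
  have hj : ∑ m, l m * α j m = -(l ᵥ* α) j := by
    simpa [mulVec, dotProduct, mul_comm] using congrFun (mulVec_eq_neg_vecMul hα l) j
  have h : (l ⬝ᵥ a) * α i j + a i * ∑ m, l m * α j m + a j * (l ᵥ* α) i = 0 := by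
    simp only [dotProduct, vecMul, Finset.sum_mul, Finset.mul_sum, ← Finset.sum_add_distrib]
    exact Finset.sum_eq_zero fun m _ => by linear_combination l m * hcyc m i j
  rw [hla, hj] at h
  linear_combination h

theorem IsSymm.mulVec_vecMul_eq_of_mul_eq_one [DecidableEq ι] {g ginv : Matrix ι ι R}
    (hg : g.IsSymm) (h : g * ginv = 1) (v : ι → R) : (g *ᵥ v) ᵥ* ginv = v := by
  rw [← vecMul_transpose, hg.eq, vecMul_vecMul, h, vecMul_one]

theorem dotProduct_mulVec_eq_sum_sum (G : Matrix ι ι R) (x y : ι → R) :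
    x ⬝ᵥ G *ᵥ y = ∑ i, ∑ k, x i * G i k * y k := by
  simp only [dotProduct, mulVec, Finset.mul_sum, mul_assoc]

theorem dotProduct_mulVec_mul_dotProduct_mulVec (G : Matrix ι ι R) (x y z w : ι → R) :
    (x ⬝ᵥ G *ᵥ y) * (z ⬝ᵥ G *ᵥ w) =
      ∑ i, ∑ j, ∑ k, ∑ m, x i * G i k * y k * (z j * G j m * w m) := by
  simp only [dotProduct_mulVec_eq_sum_sum, Finset.sum_mul_sum]

theorem sum_wedge_mul_mul_wedge {α : Matrix ι ι R} {a b : ι → R}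
    (hα : ∀ i j, α i j = a i * b j - a j * b i) (G : Matrix ι ι R) :
    ∑ i, ∑ j, ∑ k, ∑ m, α i j * G i k * G j m * α k m =
      2 * ((a ⬝ᵥ G *ᵥ a) * (b ⬝ᵥ G *ᵥ b) - (a ⬝ᵥ G *ᵥ b) * (b ⬝ᵥ G *ᵥ a)) := by
  calc ∑ i, ∑ j, ∑ k, ∑ m, α i j * G i k * G j m * α k m
      = ∑ i, ∑ j, ∑ k, ∑ m, (a i * G i k * a k * (b j * G j m * b m)
          - a i * G i k * b k * (b j * G j m * a m) - b i * G i k * a k * (a j * G j m * b m)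
          + b i * G i k * b k * (a j * G j m * a m)) := by
        simp only [hα]
        refine Finset.sum_congr rfl fun i _ => Finset.sum_congr rfl fun j _ =>
          Finset.sum_congr rfl fun k _ => Finset.sum_congr rfl fun m _ => by ring
    _ = _ := by
        simp only [Finset.sum_add_distrib, Finset.sum_sub_distrib,
          ← dotProduct_mulVec_mul_dotProduct_mulVec]
        ring

end Matrix

theorem stmt_5_general {n : ℕ} (g ginv : Fin n → Fin n → ℝ)
    (hgs : ∀ μ ν, g μ ν = g ν μ)
    (hinv : ∀ μ ν, ∑ σ, g μ σ * ginv σ ν = if μ = ν then 1 else 0)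
    (k l : Fin n → ℝ)
    (hkk : ∑ μ, ∑ ν, g μ ν * k μ * k ν = 0)
    (hkl : ∑ μ, ∑ ν, g μ ν * k μ * l ν = 1)
    (α : Fin n → Fin n → ℝ) (halt : ∀ μ ν, α μ ν = -α ν μ)
    (kb : Fin n → ℝ) (hkb : ∀ μ, kb μ = ∑ ν, g μ ν * k ν)
    (h1 : ∀ μ ν ρ, kb μ * α ν ρ + kb ν * α ρ μ + kb ρ * α μ ν = 0)
    (h2 : ∀ ν, ∑ μ, k μ * α μ ν = 0) :
    (∃ β : Fin n → ℝ,
      (∑ μ, β μ * k μ = 0) ∧ (∑ μ, β μ * l μ = 0) ∧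
      (∀ μ ν, α μ ν = kb μ * β ν - kb ν * β μ)) ∧
    (∑ μ, ∑ ν, ∑ ρ, ∑ σ, α μ ν * ginv μ ρ * ginv ν σ * α ρ σ = 0) := by
  have hg : (of g).IsSymm := funext₂ fun μ ν => hgs ν μ
  have hginv : of g * of ginv = 1 := by
    ext μ ν; simpa [mul_apply, one_apply] using hinv μ ν
  have hα : (of α)ᵀ = -of α := funext₂ fun μ ν => halt ν μ
  have hkα : k ᵥ* of α = 0 := funext h2
  have hkkb : k ⬝ᵥ kb = 0 := by
    rw [← hkk]
    simp only [dotProduct, hkb, Finset.mul_sum]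
    exact Finset.sum_congr rfl fun μ _ => Finset.sum_congr rfl fun ν _ => by ring
  have hlkb : l ⬝ᵥ kb = 1 := by
    rw [← hkl, Finset.sum_comm]
    simp only [dotProduct, hkb, Finset.mul_sum]
    exact Finset.sum_congr rfl fun μ _ => Finset.sum_congr rfl fun ν _ => by rw [hgs]; ring
  have hβk : l ᵥ* of α ⬝ᵥ k = 0 := by
    rw [← dotProduct_mulVec, mulVec_eq_neg_vecMul hα, hkα, neg_zero, dotProduct_zero]
  have hαβ := eq_wedge_of_cyclic_sum_eq_zero hα h1 hlkb
  refine ⟨⟨l ᵥ* of α, hβk, vecMul_dotProduct_self_eq_zero hα l, hαβ⟩, ?_⟩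
  have hkbk : kb ᵥ* of ginv = k := by
    rw [show kb = of g *ᵥ k from funext hkb]
    exact hg.mulVec_vecMul_eq_of_mul_eq_one hginv k
  refine (sum_wedge_mul_mul_wedge hαβ (of ginv)).trans ?_
  rw [dotProduct_mulVec kb, dotProduct_mulVec kb, hkbk, hkkb, dotProduct_comm k, hβk]
  ring

/-- If an alternating 2-form `α` satisfies both `k♭ ∧ α = 0` (`k_{[μ}α_{νρ]} = 0`)
and `α(k,·) = 0` (`k^μ α_{μν} = 0`) for a lightlike `k`, then `α = k♭ ∧ β` for a
transversal 1-form `β`, and the full contraction `α_{μν} α^{μν}` vanishes. -/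
theorem stmt_5 {n : ℕ} (g ginv : Fin n → Fin n → ℝ)
    (hgs : ∀ μ ν, g μ ν = g ν μ)
    (hinv : ∀ μ ν, ∑ σ, g μ σ * ginv σ ν = if μ = ν then 1 else 0)
    (hinv' : ∀ μ ν, ∑ σ, ginv μ σ * g σ ν = if μ = ν then 1 else 0)
    (k l : Fin n → ℝ)
    (hkk : ∑ μ, ∑ ν, g μ ν * k μ * k ν = 0)
    (hll : ∑ μ, ∑ ν, g μ ν * l μ * l ν = 0)
    (hkl : ∑ μ, ∑ ν, g μ ν * k μ * l ν = 1)
    (α : Fin n → Fin n → ℝ) (halt : ∀ μ ν, α μ ν = -α ν μ)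
    (kb : Fin n → ℝ) (hkb : ∀ μ, kb μ = ∑ ν, g μ ν * k ν)
    (h1 : ∀ μ ν ρ, kb μ * α ν ρ + kb ν * α ρ μ + kb ρ * α μ ν = 0)
    (h2 : ∀ ν, ∑ μ, k μ * α μ ν = 0) :
    (∃ β : Fin n → ℝ,
      (∑ μ, β μ * k μ = 0) ∧ (∑ μ, β μ * l μ = 0) ∧
      (∀ μ ν, α μ ν = kb μ * β ν - kb ν * β μ)) ∧
    (∑ μ, ∑ ν, ∑ ρ, ∑ σ, α μ ν * ginv μ ρ * ginv ν σ * α ρ σ = 0) :=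
  stmt_5_general g ginv hgs hinv k l hkk hkl α halt kb hkb h1 h2
end

section
/- Suppose an alternating 2-form F on V satisfies k♭ ∧ F = 0 for some nonzero vector k and F ≠ 0, together with F(k,·) = 0, where g is a nondegenerate symmetric bilinear form. Then k is lightlike: g(k,k) = 0. -/
theorem LinearMap.IsAlt.smul_eq_zero_of_wedge_eq_zero {R M : Type*} [CommRing R]
    [AddCommGroup M] [Module R M] {φ : M →ₗ[R] R} {F : M →ₗ[R] M →ₗ[R] R} (hF : F.IsAlt)
    {k : M} (hwedge : ∀ u v w : M, φ u * F v w + φ v * F w u + φ w * F u v = 0)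
    (hk : ∀ v : M, F k v = 0) :
    φ k • F = 0 := by
  ext v w
  have hwk : F w k = 0 := hF.eq_iff.mp (hk w)
  simpa [hk, hwk] using hwedge k v w

theorem stmt_6_general {V : Type*} [AddCommGroup V] [Module ℝ V]
    (g : V →ₗ[ℝ] V →ₗ[ℝ] ℝ)
    (k : V)
    (F : V →ₗ[ℝ] V →ₗ[ℝ] ℝ) (hFalt : ∀ v : V, F v v = 0) (hF0 : F ≠ 0)
    (h1 : ∀ u v w : V, g k u * F v w + g k v * F w u + g k w * F u v = 0)
    (h2 : ∀ v : V, F k v = 0) :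
    g k k = 0 := by
  have hsmul : g k k • F = 0 :=
    LinearMap.IsAlt.smul_eq_zero_of_wedge_eq_zero (F := F) hFalt h1 h2
  exact (smul_eq_zero.mp hsmul).resolve_right hF0

/-- If a nonzero alternating 2-form `F` satisfies `k♭ ∧ F = 0` and `F(k,·) = 0`
for a nonzero vector `k`, then `k` is lightlike: `g k k = 0`. -/
theorem stmt_6 {V : Type*} [AddCommGroup V] [Module ℝ V]
    (g : V →ₗ[ℝ] V →ₗ[ℝ] ℝ)
    (hsymm : ∀ x y : V, g x y = g y x)
    (hnd : ∀ v : V, (∀ w : V, g v w = 0) → v = 0)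
    (k : V) (hk0 : k ≠ 0)
    (F : V →ₗ[ℝ] V →ₗ[ℝ] ℝ) (hFalt : ∀ v : V, F v v = 0) (hF0 : F ≠ 0)
    (h1 : ∀ u v w : V, g k u * F v w + g k v * F w u + g k w * F u v = 0)
    (h2 : ∀ v : V, F k v = 0) :
    g k k = 0 :=
  stmt_6_general g k F hFalt hF0 h1 h2
end

section
/- The pp-wave metric g = 2 du dv + H(u,z) du² - δ_{ij} dz^i dz^j is a vacuum solution of the Einstein equations (Ric = 0) if and only if H is harmonic in the transversal coordinates: Σ_i ∂_i ∂_i H(u,z) = 0. -/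
private lemma aux_line {m : ℕ} (f : (Fin m → ℝ) → ℝ) (hf : Differentiable ℝ f)
    (k : Fin m) (hfk : ∀ x t, f (Function.update x k t) = f x) (x : Fin m → ℝ) :
    fderiv ℝ f x (Pi.single k 1) = 0 := by
  set e : Fin m → ℝ := Pi.single k 1 with he
  have key : (fun t : ℝ => f (x + t • e)) = fun _ => f x := by
    funext t
    have hx : x + t • e = Function.update x k (x k + t) := by
      funext j
      rcases eq_or_ne j k with rfl | h
      · simp [he, Function.update]
      · simp [he, Function.update_of_ne h, Pi.single_apply, h]
    rw [hx, hfk]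
  have hline : HasDerivAt (fun t : ℝ => x + t • e) e 0 := by
    simpa using ((hasDerivAt_id (0:ℝ)).smul_const e).const_add x
  have h1 : HasDerivAt (fun t : ℝ => f (x + t • e)) (fderiv ℝ f x e) 0 := by
    have := ((hf (x + (0:ℝ) • e)).hasFDerivAt).comp_hasDerivAt 0 hline
    simp only [zero_smul, add_zero] at this; exact this
  rw [key] at h1
  exact h1.unique (hasDerivAt_const _ _)

private lemma aux_update {m : ℕ} (f : (Fin m → ℝ) → ℝ) (hf : Differentiable ℝ f)
    (k : Fin m) (hfk : ∀ x t, f (Function.update x k t) = f x)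
    (x : Fin m → ℝ) (t : ℝ) (w : Fin m → ℝ) :
    fderiv ℝ f (Function.update x k t) w = fderiv ℝ f x w := by
  set e : Fin m → ℝ := Pi.single k 1 with he
  set L : (Fin m → ℝ) →L[ℝ] (Fin m → ℝ) :=
    ContinuousLinearMap.id ℝ (Fin m → ℝ) - (ContinuousLinearMap.proj k).smulRight e with hL
  have hLapp : ∀ v : Fin m → ℝ, L v = v - (v k) • e := fun v => rfl
  have hgt : (fun y => Function.update y k t) = fun y => L y + t • e := by
    funext y j
    rcases eq_or_ne j k with rfl | h
    · simp [hLapp, he, Function.update]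
    · simp [hLapp, he, Function.update_of_ne h, Pi.single_apply, h]
  have hfg : (fun y => f (Function.update y k t)) = f := by
    funext y; exact hfk y t
  have hgd : HasFDerivAt (fun y => Function.update y k t) L x := by
    rw [hgt]
    exact (L.hasFDerivAt).add_const (t • e)
  have hcomp : HasFDerivAt (fun y => f (Function.update y k t))
      ((fderiv ℝ f (Function.update x k t)).comp L) x :=
    ((hf _).hasFDerivAt).comp x hgd
  rw [hfg] at hcomp
  have huniq := hcomp.unique (hf x).hasFDerivAt
  have h2 : fderiv ℝ f (Function.update x k t) (L w) = fderiv ℝ f x w := by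
    rw [← huniq]; rfl
  rw [hLapp] at h2
  have h3 : fderiv ℝ f (Function.update x k t) (w - (w k) • e)
      = fderiv ℝ f (Function.update x k t) w
        - (w k) * fderiv ℝ f (Function.update x k t) e := by
    rw [map_sub, map_smul]; rfl
  rw [h3, aux_line f hf k hfk] at h2
  simpa using h2

private lemma sum_delta_mul {m : ℕ} (a : Fin m) (c : ℝ) (f : Fin m → ℝ) :
    (∑ σ, (if σ = a then c else 0) * f σ) = c * f a := by
  rw [Finset.sum_eq_single a]
  · simp
  · intro b _ hb; simp [hb]
  · simp

private lemma sum_two_delta_mul {m : ℕ} (a b : Fin m) (hab : a ≠ b) (c d : ℝ) (f : Fin m → ℝ) :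
    (∑ σ, (if σ = a then c else if σ = b then d else 0) * f σ) = c * f a + d * f b := by
  have h : ∀ σ : Fin m, (if σ = a then c else if σ = b then d else 0) * f σ
      = (if σ = a then c else 0) * f σ + (if σ = b then d else 0) * f σ := by
    intro σ
    rcases eq_or_ne σ a with rfl | h1
    · simp [hab]
    · simp [h1]
  rw [Finset.sum_congr rfl (fun σ _ => h σ), Finset.sum_add_distrib,
    sum_delta_mul, sum_delta_mul]

private lemma ite_comm_eq {α : Type*} [DecidableEq α] (a b : α) (c : ℝ) :
    (if b = a then c else 0) = if a = b then c else 0 := by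
  rcases eq_or_ne a b with rfl | h
  · simp
  · simp [h, Ne.symm h]

private lemma ginv_formula {n : ℕ}
    (Hf : (Fin (n+2) → ℝ) → ℝ)
    (g ginv : (Fin (n+2) → ℝ) → Fin (n+2) → Fin (n+2) → ℝ)
    (hg : ∀ x μ ν, g x μ ν =
      if μ = 0 then (if ν = 0 then Hf x else if ν = 1 then 1 else 0)
      else if μ = 1 then (if ν = 0 then 1 else 0)
      else (if ν = μ then -1 else 0))
    (hginv : ∀ x μ ν, ∑ σ, g x μ σ * ginv x σ ν = if μ = ν then 1 else 0)
    (x : Fin (n+2) → ℝ) (μ ν : Fin (n+2)) :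
    ginv x μ ν = if μ = 0 then (if ν = 1 then 1 else 0)
      else if μ = 1 then (if ν = 0 then 1 else if ν = 1 then -Hf x else 0)
      else (if ν = μ then -1 else 0) := by
  have h01 : (0 : Fin (n+2)) ≠ 1 := by
    intro h
    have := congrArg Fin.val h
    simp [Fin.val_zero, Fin.val_one] at this
  set G : Fin (n+2) → Fin (n+2) → ℝ := fun a b =>
    if a = 0 then (if b = 1 then 1 else 0)
    else if a = 1 then (if b = 0 then 1 else if b = 1 then -Hf x else 0)
    else (if b = a then -1 else 0) with hGdef
  have hleft : ∀ a b : Fin (n+2), (∑ σ, G a σ * g x σ b) = if a = b then 1 else 0 := by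
    intro a b
    rcases eq_or_ne a 0 with rfl | ha0
    · have : ∀ σ : Fin (n+2), G 0 σ = if σ = 1 then 1 else 0 := fun σ => by simp [hGdef]
      simp only [this]
      rw [sum_delta_mul 1 1 (fun σ => g x σ b), hg]
      simp [h01.symm]
      exact ite_comm_eq 0 b 1
    rcases eq_or_ne a 1 with rfl | ha1
    · have : ∀ σ : Fin (n+2), G 1 σ = if σ = 0 then 1 else if σ = 1 then -Hf x else 0 :=
        fun σ => by simp [hGdef, h01.symm]
      simp only [this]
      rw [sum_two_delta_mul 0 1 h01 1 (-Hf x) (fun σ => g x σ b), hg, hg]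
      simp [h01.symm]
      rcases eq_or_ne b 0 with rfl | hb
      · simp [h01.symm]
      rcases eq_or_ne b 1 with rfl | hb1
      · simp [h01]
      · simp [hb, hb1, Ne.symm hb1]
    · have : ∀ σ : Fin (n+2), G a σ = if σ = a then -1 else 0 :=
        fun σ => by simp [hGdef, ha0, ha1]
      simp only [this]
      rw [sum_delta_mul a (-1) (fun σ => g x σ b), hg]
      simp [ha0, ha1]
      exact ite_comm_eq a b 1
  calc ginv x μ ν = ∑ σ, (if σ = μ then (1:ℝ) else 0) * ginv x σ ν := by
        rw [sum_delta_mul μ 1 (fun σ => ginv x σ ν)]; ring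
    _ = ∑ σ, (∑ τ, G μ τ * g x τ σ) * ginv x σ ν := by
        refine Finset.sum_congr rfl fun σ _ => ?_
        rw [hleft μ σ, ite_comm_eq]
    _ = ∑ τ, G μ τ * ∑ σ, g x τ σ * ginv x σ ν := by
        simp only [Finset.sum_mul]
        rw [Finset.sum_comm]
        simp [Finset.mul_sum, mul_assoc]
    _ = ∑ τ, G μ τ * (if τ = ν then 1 else 0) := by
        simp only [hginv]
    _ = G μ ν := by simp [mul_ite, Finset.sum_ite_eq']
    _ = _ := by rw [hGdef]

/-- The pp-wave metric is Ricci-flat (a vacuum solution of Einstein's equations)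
iff `H` is harmonic in the transversal coordinates: `Σ_i ∂_i∂_i H = 0`. -/
theorem stmt_10 {n : ℕ} (H : (Fin (n + 2) → ℝ) → ℝ)
    (hH : ContDiff ℝ (⊤ : ℕ∞) H)
    (hHv : ∀ (x : Fin (n + 2) → ℝ) (t : ℝ), H (Function.update x 1 t) = H x)
    (g ginv : (Fin (n + 2) → ℝ) → Fin (n + 2) → Fin (n + 2) → ℝ)
    (hg : ∀ x μ ν, g x μ ν =
      if μ = 0 then (if ν = 0 then H x else if ν = 1 then 1 else 0)
      else if μ = 1 then (if ν = 0 then 1 else 0)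
      else (if ν = μ then -1 else 0))
    (hginv : ∀ x μ ν, ∑ σ, g x μ σ * ginv x σ ν = if μ = ν then 1 else 0)
    (hginv' : ∀ x μ ν, ∑ σ, ginv x μ σ * g x σ ν = if μ = ν then 1 else 0)
    (Γ : (Fin (n + 2) → ℝ) → Fin (n + 2) → Fin (n + 2) → Fin (n + 2) → ℝ)
    (hΓ : ∀ x μ ν ρ, Γ x μ ν ρ = (1 / 2) * ∑ σ, ginv x ρ σ *
      (fderiv ℝ (fun y => g y ν σ) x (Pi.single μ 1) +
       fderiv ℝ (fun y => g y μ σ) x (Pi.single ν 1) -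
       fderiv ℝ (fun y => g y μ ν) x (Pi.single σ 1)))
    (Riem : (Fin (n + 2) → ℝ) → Fin (n + 2) → Fin (n + 2) → Fin (n + 2) → Fin (n + 2) → ℝ)
    (hRiem : ∀ x μ ν ρ τ, Riem x μ ν ρ τ =
      fderiv ℝ (fun y => Γ y ν ρ τ) x (Pi.single μ 1) -
      fderiv ℝ (fun y => Γ y μ ρ τ) x (Pi.single ν 1) +
      (∑ σ, Γ x μ σ τ * Γ x ν ρ σ) - ∑ σ, Γ x ν σ τ * Γ x μ ρ σ)
    (Ric : (Fin (n + 2) → ℝ) → Fin (n + 2) → Fin (n + 2) → ℝ)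
    (hRic : ∀ (x : Fin (n + 2) → ℝ) (μ ν : Fin (n + 2)), Ric x μ ν = ∑ ρ, Riem x μ ρ ν ρ) :
    (∀ (x : Fin (n + 2) → ℝ) (μ ν : Fin (n + 2)), Ric x μ ν = 0) ↔
      (∀ x : Fin (n + 2) → ℝ,
        ∑ i : Fin (n + 2), (if 2 ≤ (i : ℕ) then
          fderiv ℝ (fun y => fderiv ℝ H y (Pi.single i 1)) x (Pi.single i 1)
          else 0) = 0) := by
  classical
  have h01 : (0 : Fin (n+2)) ≠ 1 := by
    intro h
    have := congrArg Fin.val h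
    simp [Fin.val_zero, Fin.val_one] at this
  have hval1 : ((1 : Fin (n+2)) : ℕ) = 1 := by
    simp [Fin.val_one]
  have hfin2 : ∀ ρ : Fin (n+2), (¬ρ = 0 ∧ ¬ρ = 1) ↔ 2 ≤ (ρ : ℕ) := by
    intro ρ
    rw [Fin.ext_iff, Fin.ext_iff, Fin.val_zero, hval1]
    omega
  have hG : ∀ x (μ ν : Fin (n+2)), ginv x μ ν =
      if μ = 0 then (if ν = 1 then 1 else 0)
      else if μ = 1 then (if ν = 0 then 1 else if ν = 1 then -H x else 0)
      else (if ν = μ then -1 else 0) :=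
    fun x μ ν => ginv_formula H g ginv hg hginv x μ ν
  have hHd : Differentiable ℝ H := hH.differentiable (by simp)
  have dH1 : ∀ x, fderiv ℝ H x (Pi.single (1 : Fin (n+2)) 1) = 0 :=
    fun x => aux_line H hHd 1 hHv x
  have hdHdiff : ∀ w : Fin (n+2) → ℝ, Differentiable ℝ (fun y => fderiv ℝ H y w) := by
    intro w
    have h1 : ContDiff ℝ (⊤ : ℕ∞) (fderiv ℝ H) := hH.fderiv_right (by simp)
    exact (h1.differentiable (by simp)).clm_apply (differentiable_const w)
  have hHupd : ∀ x (t : ℝ) (w : Fin (n+2) → ℝ),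
      fderiv ℝ H (Function.update x 1 t) w = fderiv ℝ H x w :=
    fun x t w => aux_update H hHd 1 hHv x t w
  have d2H1 : ∀ x (w : Fin (n+2) → ℝ),
      fderiv ℝ (fun y => fderiv ℝ H y w) x (Pi.single (1 : Fin (n+2)) 1) = 0 := by
    intro x w
    exact aux_line (fun y => fderiv ℝ H y w) (hdHdiff w) 1 (fun z t => hHupd z t w) x
  -- derivative of the metric components
  have hgd : ∀ (μ ν : Fin (n+2)) x (w : Fin (n+2) → ℝ),
      fderiv ℝ (fun y => g y μ ν) x w = if μ = 0 ∧ ν = 0 then fderiv ℝ H x w else 0 := by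
    intro μ ν x w
    by_cases h0 : μ = 0 ∧ ν = 0
    · obtain ⟨rfl, rfl⟩ := h0
      have : (fun y => g y 0 0) = H := by funext y; simp [hg]
      rw [this]; simp
    · rw [if_neg h0]
      have hc : (fun y => g y μ ν) = fun _ => g x μ ν := by
        funext y
        rcases eq_or_ne μ 0 with rfl | hμ
        · have hν : ¬ν = 0 := fun h => h0 ⟨rfl, h⟩
          simp [hg, hν]
        · simp [hg, hμ]
      rw [hc, fderiv_fun_const]
      simp
  -- closed form of the Christoffel symbols
  have hΓ' : ∀ x (μ ν ρ : Fin (n+2)), Γ x μ ν ρ =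
      if ρ = 0 then 0
      else if ρ = 1 then
        ((if ν = 0 then fderiv ℝ H x (Pi.single μ 1) else 0)
        + (if μ = 0 then fderiv ℝ H x (Pi.single ν 1) else 0)
        - (if μ = 0 ∧ ν = 0 then fderiv ℝ H x (Pi.single (0 : Fin (n+2)) 1) else 0)) / 2
      else if μ = 0 ∧ ν = 0 then fderiv ℝ H x (Pi.single ρ 1) / 2 else 0 := by
    intro x μ ν ρ
    rw [hΓ]
    have hB : ∀ σ : Fin (n+2),
        (fderiv ℝ (fun y => g y ν σ) x (Pi.single μ 1)
          + fderiv ℝ (fun y => g y μ σ) x (Pi.single ν 1)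
          - fderiv ℝ (fun y => g y μ ν) x (Pi.single σ 1))
        = (if ν = 0 ∧ σ = 0 then fderiv ℝ H x (Pi.single μ 1) else 0)
          + (if μ = 0 ∧ σ = 0 then fderiv ℝ H x (Pi.single ν 1) else 0)
          - (if μ = 0 ∧ ν = 0 then fderiv ℝ H x (Pi.single σ 1) else 0) := by
      intro σ; rw [hgd, hgd, hgd]
    have hB1 : ((if ν = 0 ∧ (1:Fin (n+2)) = 0 then fderiv ℝ H x (Pi.single μ 1) else 0)
          + (if μ = 0 ∧ (1:Fin (n+2)) = 0 then fderiv ℝ H x (Pi.single ν 1) else 0)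
          - (if μ = 0 ∧ ν = 0 then fderiv ℝ H x (Pi.single (1:Fin (n+2)) 1) else 0)) = 0 := by
      simp [h01.symm, dH1 x]
    rcases eq_or_ne ρ 0 with rfl | hρ0
    · have hrow : ∀ σ : Fin (n+2), ginv x 0 σ = if σ = 1 then 1 else 0 :=
        fun σ => by simp [hG]
      simp only [hrow, hB]
      rw [sum_delta_mul]
      rw [hB1]
      simp [h01]
    rcases eq_or_ne ρ 1 with rfl | hρ1
    · have hrow : ∀ σ : Fin (n+2), ginv x 1 σ = if σ = 0 then 1 else if σ = 1 then -H x else 0 :=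
        fun σ => by simp [hG, h01.symm]
      simp only [hrow, hB]
      rw [sum_two_delta_mul 0 1 h01, hB1]
      by_cases hν : ν = 0 <;> by_cases hμ : μ = 0 <;>
        simp [hν, hμ, Ne.symm h01] <;> ring
    · have hrow : ∀ σ : Fin (n+2), ginv x ρ σ = if σ = ρ then -1 else 0 :=
        fun σ => by simp [hG, hρ0, hρ1]
      simp only [hrow, hB]
      rw [sum_delta_mul]
      simp only [if_neg hρ0, if_neg hρ1]
      by_cases hμ : μ = 0 <;> by_cases hν : ν = 0 <;>
        simp [hμ, hν, hρ0] <;> ring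
  -- derivative of half a second derivative
  have hfd1 : ∀ (a : Fin (n+2)) x (w : Fin (n+2) → ℝ),
      fderiv ℝ (fun y => fderiv ℝ H y (Pi.single a 1) / 2) x w
      = fderiv ℝ (fun y => fderiv ℝ H y (Pi.single a 1)) x w / 2 := by
    intro a x w
    have hd : DifferentiableAt ℝ (fun y => fderiv ℝ H y (Pi.single a 1)) x :=
      (hdHdiff (Pi.single a 1)) x
    have : (fun y => fderiv ℝ H y (Pi.single a 1) / 2)
        = fun y => (2:ℝ)⁻¹ * fderiv ℝ H y (Pi.single a 1) := by
      funext y; ring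
    rw [this, fderiv_const_mul hd]
    simp [ContinuousLinearMap.smul_apply]
    ring
  -- derivative of the Christoffel symbols
  have hΓd : ∀ x (w : Fin (n+2) → ℝ) (μ ν ρ : Fin (n+2)),
      fderiv ℝ (fun y => Γ y μ ν ρ) x w =
      if ρ = 0 then 0
      else if ρ = 1 then
        ((if ν = 0 then fderiv ℝ (fun y => fderiv ℝ H y (Pi.single μ 1)) x w else 0)
        + (if μ = 0 then fderiv ℝ (fun y => fderiv ℝ H y (Pi.single ν 1)) x w else 0)
        - (if μ = 0 ∧ ν = 0 then
            fderiv ℝ (fun y => fderiv ℝ H y (Pi.single (0 : Fin (n+2)) 1)) x w else 0)) / 2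
      else if μ = 0 ∧ ν = 0 then
        fderiv ℝ (fun y => fderiv ℝ H y (Pi.single ρ 1)) x w / 2 else 0 := by
    intro x w μ ν ρ
    have hfun : (fun y => Γ y μ ν ρ) = fun y =>
        if ρ = 0 then 0
        else if ρ = 1 then
          ((if ν = 0 then fderiv ℝ H y (Pi.single μ 1) else 0)
          + (if μ = 0 then fderiv ℝ H y (Pi.single ν 1) else 0)
          - (if μ = 0 ∧ ν = 0 then fderiv ℝ H y (Pi.single (0 : Fin (n+2)) 1) else 0)) / 2
        else if μ = 0 ∧ ν = 0 then fderiv ℝ H y (Pi.single ρ 1) / 2 else 0 :=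
      funext fun y => hΓ' y μ ν ρ
    rw [hfun]
    rcases eq_or_ne ρ 0 with rfl | hρ0
    · simp
    rcases eq_or_ne ρ 1 with rfl | hρ1
    · by_cases hν : ν = 0 <;> by_cases hμ : μ = 0
      · obtain rfl := hν; obtain rfl := hμ
        simp only [Ne.symm h01, if_false, if_true, eq_self_iff_true, and_self,
          add_sub_cancel_right, ite_true, ite_false]
        exact hfd1 0 x w
      · simp only [Ne.symm h01, hν, hμ, if_false, if_true, eq_self_iff_true, and_true,
          true_and, and_false, false_and, add_zero, sub_zero, ite_true, ite_false]
        exact hfd1 μ x w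
      · simp only [Ne.symm h01, hν, hμ, if_false, if_true, eq_self_iff_true, and_true,
          true_and, and_false, false_and, zero_add, sub_zero, ite_true, ite_false]
        exact hfd1 ν x w
      · simp only [Ne.symm h01, hν, hμ, if_false, if_true, eq_self_iff_true, and_true,
          true_and, and_false, false_and, zero_add, sub_zero, ite_true, ite_false]
        simp
    · simp only [if_neg hρ0, if_neg hρ1]
      by_cases hμν : μ = 0 ∧ ν = 0
      · simp only [if_pos hμν]
        exact hfd1 ρ x w
      · simp only [if_neg hμν]
        simp
  -- the trace of the Christoffel symbols vanishes
  have htrace : ∀ x (ν ρ : Fin (n+2)), Γ x ρ ν ρ = 0 := by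
    intro x ν ρ
    rw [hΓ']
    rcases eq_or_ne ρ 0 with rfl | hρ0
    · simp
    rcases eq_or_ne ρ 1 with rfl | hρ1
    · simp [Ne.symm h01, dH1 x]
    · simp [hρ0, hρ1]
  -- quadratic terms vanish
  have hquad : ∀ x (μ ν ρ σ : Fin (n+2)), Γ x μ σ ρ * Γ x ρ ν σ = 0 := by
    intro x μ ν ρ σ
    rcases eq_or_ne ρ 0 with rfl | hρ0
    · rw [hΓ']; simp
    rcases eq_or_ne ρ 1 with rfl | hρ1
    · have h2 : Γ x 1 ν σ = 0 := by
        rw [hΓ']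
        rcases eq_or_ne σ 0 with rfl | hσ0
        · simp
        rcases eq_or_ne σ 1 with rfl | hσ1
        · simp [Ne.symm h01, dH1 x]
        · simp [hσ0, hσ1, Ne.symm h01]
      rw [h2, mul_zero]
    · by_cases hμσ : μ = 0 ∧ σ = 0
      · obtain ⟨rfl, rfl⟩ := hμσ
        have h2 : Γ x ρ ν 0 = 0 := by rw [hΓ']; simp
        rw [h2, mul_zero]
      · have h1 : Γ x μ σ ρ = 0 := by rw [hΓ']; simp [hρ0, hρ1, hμσ]
        rw [h1, zero_mul]
  -- the contracted Riemann tensor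
  have hRiem' : ∀ x (μ ν ρ : Fin (n+2)), Riem x μ ρ ν ρ
      = -(fderiv ℝ (fun y => Γ y μ ν ρ) x (Pi.single ρ 1)) := by
    intro x μ ν ρ
    rw [hRiem]
    have t1 : (fun y => Γ y ρ ν ρ) = fun _ => (0:ℝ) := funext fun y => htrace y ν ρ
    have t3 : (∑ σ, Γ x μ σ ρ * Γ x ρ ν σ) = 0 :=
      Finset.sum_eq_zero fun σ _ => hquad x μ ν ρ σ
    have t4 : (∑ σ, Γ x ρ σ ρ * Γ x μ ν σ) = 0 :=
      Finset.sum_eq_zero fun σ _ => by rw [htrace x σ ρ, zero_mul]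
    rw [t1, t3, t4, fderiv_fun_const]
    simp
  -- closed form of the Ricci tensor
  have hRic' : ∀ x (μ ν : Fin (n+2)), Ric x μ ν =
      if μ = 0 ∧ ν = 0 then
        -((∑ i : Fin (n + 2), (if 2 ≤ (i : ℕ) then
          fderiv ℝ (fun y => fderiv ℝ H y (Pi.single i 1)) x (Pi.single i 1)
          else 0)) / 2)
      else 0 := by
    intro x μ ν
    rw [hRic]
    have hsummand : ∀ ρ : Fin (n+2), Riem x μ ρ ν ρ =
        if μ = 0 ∧ ν = 0 then
          -((if 2 ≤ (ρ : ℕ) then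
            fderiv ℝ (fun y => fderiv ℝ H y (Pi.single ρ 1)) x (Pi.single ρ 1) else 0) / 2)
        else 0 := by
      intro ρ
      rw [hRiem' x μ ν ρ, hΓd]
      rcases eq_or_ne ρ 0 with rfl | hρ0
      · have hn2 : ¬(2 ≤ ((0 : Fin (n+2)) : ℕ)) := by simp
        simp [hn2]
      rcases eq_or_ne ρ 1 with rfl | hρ1
      · have hn2 : ¬(2 ≤ ((1 : Fin (n+2)) : ℕ)) := by rw [hval1]; omega
        simp [Ne.symm h01, d2H1, hn2]
      · have h2 : 2 ≤ (ρ : ℕ) := (hfin2 ρ).mp ⟨hρ0, hρ1⟩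
        simp only [if_neg hρ0, if_neg hρ1, if_pos h2]
        by_cases hμν : μ = 0 ∧ ν = 0 <;> simp [hμν]
    rw [Finset.sum_congr rfl (fun ρ _ => hsummand ρ)]
    by_cases hμν : μ = 0 ∧ ν = 0
    · simp only [if_pos hμν]
      rw [Finset.sum_neg_distrib, Finset.sum_div]
    · simp [hμν]
  -- conclusion
  constructor
  · intro h x
    have h0 := h x 0 0
    rw [hRic',
      if_pos (show (0 : Fin (n+2)) = 0 ∧ (0 : Fin (n+2)) = 0 from ⟨rfl, rfl⟩)] at h0
    linarith
  · intro h x μ ν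
    rw [hRic']
    by_cases hμν : μ = 0 ∧ ν = 0
    · simp [hμν, h x]
    · simp [hμν]
end

section
/- For the curvature 2-form R_{ab} = k_a k_b α_c θ̃^c ∧ k♭ + 2 V_{c[a} k_{b]} θ̃^c ∧ k♭, where α_c and V_{ca} are transversal (V_{ca}k^a = V_{ca}l^a = 0 = V_{ca}k^c etc.), all contractions with k vanish: k^a R_{ab} = 0, k^b R_{ab} = 0, and moreover k♭ ∧ R_{ab} = 0 and R_{ab}(k, ·) = 0 (i.e. both generalized Lichnerowicz curvature conditions hold). -/
/-!
Writing `R_{ab} = ∑_c A_{abc} θ̃^c ∧ k♭` with `A_{abc} = k_a k_b α_c + V_{ca} k_b - V_{cb} k_a`,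
each condition reduces to one factor: `k^a A_{abc} = k^b A_{abc} = 0` because `k` is null and
`V` is transversal, `k ⌟ (θ̃^c ∧ k♭) = 0` because `θ̃^c(k) = k♭(k) = 0`, and
`k♭ ∧ θ̃^c ∧ k♭ = 0` identically.
-/

open Finset

def wedge {ι : Type*} (v w : ι → ℝ) (x y : ι) : ℝ := v x * w y - v y * w x

theorem cyclic_mul_wedge_self {ι : Type*} (v k : ι → ℝ) (x y z : ι) :
    k x * wedge v k y z + k y * wedge v k z x + k z * wedge v k x y = 0 := by
  unfold wedge; ring

section

variable {ι κ : Type*} [Fintype ι] [Fintype κ]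

theorem sum_mul_wedge_eq_zero {u v w : ι → ℝ} (hv : ∑ x, u x * v x = 0)
    (hw : ∑ x, u x * w x = 0) (y : ι) : ∑ x, u x * wedge v w x y = 0 := by
  have h : ∀ x, u x * wedge v w x y = (u x * v x) * w y - v y * (u x * w x) := fun x => by
    unfold wedge; ring
  rw [sum_congr rfl fun x _ => h x, sum_sub_distrib, ← sum_mul, ← mul_sum, hv, hw]
  ring

theorem sum_mul_add_mul_eq_zero {u v w : ι → ℝ} (hv : ∑ a, u a * v a = 0)
    (hw : ∑ a, u a * w a = 0) (s t : ℝ) : ∑ a, u a * (v a * s + w a * t) = 0 := by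
  have h : ∀ a, u a * (v a * s + w a * t) = (u a * v a) * s + (u a * w a) * t := fun a => by
    ring
  rw [sum_congr rfl fun a _ => h a, sum_add_distrib, ← sum_mul, ← sum_mul, hv, hw]
  ring

theorem sum_mul_sum_mul_eq_zero_of_coeff {u : ι → ℝ} {A : ι → κ → ℝ} (F : κ → ℝ)
    (hA : ∀ c, ∑ a, u a * A a c = 0) : ∑ a, u a * ∑ c, A a c * F c = 0 := by
  simp only [mul_sum]
  rw [sum_comm]
  refine sum_eq_zero fun c _ => ?_
  simp only [← mul_assoc, ← sum_mul, hA c, zero_mul]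

theorem sum_mul_sum_mul_eq_zero_of_form {u : ι → ℝ} (A : κ → ℝ) {F : κ → ι → ℝ}
    (hF : ∀ c, ∑ x, u x * F c x = 0) : ∑ x, u x * ∑ c, A c * F c x = 0 := by
  simp only [mul_sum]
  rw [sum_comm]
  refine sum_eq_zero fun c _ => ?_
  simp only [mul_left_comm (u _), ← mul_sum, hF c, mul_zero]

theorem sum_raised_mul_self_eq_zero {ginv : ι → ι → ℝ} {k kU : ι → ℝ}
    (hkk : ∑ a, ∑ b, ginv a b * k a * k b = 0) (hkU : ∀ a, kU a = ∑ b, ginv a b * k b) :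
    ∑ a, kU a * k a = 0 := by
  simp only [hkU, sum_mul]
  rw [← hkk]
  exact sum_congr rfl fun a _ => sum_congr rfl fun b _ => by ring

end

/-- `R a b x y` is the `(x,y)` component of the 2-form `R_{ab}`. -/
theorem stmt_18_general {n : ℕ} (ginv : Fin n → Fin n → ℝ)
    (k : Fin n → ℝ)
    (hkk : ∑ a, ∑ b, ginv a b * k a * k b = 0)
    (kU : Fin n → ℝ)
    (hkU : ∀ a, kU a = ∑ b, ginv a b * k b)
    (θ : Fin n → Fin n → ℝ)                    -- transversal coframe θ̃^c
    (hθk : ∀ c, ∑ a, kU a * θ c a = 0)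
    (al : Fin n → ℝ)
    (Vt : Fin n → Fin n → ℝ)                   -- V_{ca}, transversal
    (hV2 : ∀ a, ∑ c, kU c * Vt a c = 0)
    (R : Fin n → Fin n → Fin n → Fin n → ℝ)
    (hR : ∀ a b x y, R a b x y =
      k a * k b * ∑ c, al c * (θ c x * k y - θ c y * k x) +
      ∑ c, (Vt c a * k b - Vt c b * k a) * (θ c x * k y - θ c y * k x)) :
    (∀ b x y, ∑ a, kU a * R a b x y = 0) ∧
    (∀ a x y, ∑ b, kU b * R a b x y = 0) ∧
    (∀ a b x y z, k x * R a b y z + k y * R a b z x + k z * R a b x y = 0) ∧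
    (∀ a b y, ∑ x, kU x * R a b x y = 0) := by
  have hkUk : ∑ a, kU a * k a = 0 := sum_raised_mul_self_eq_zero hkk hkU
  have hRA : ∀ a b x y, R a b x y =
      ∑ c, (k a * k b * al c + (Vt c a * k b - Vt c b * k a)) * wedge (θ c) k x y := by
    intro a b x y
    rw [hR, mul_sum, ← sum_add_distrib]
    exact sum_congr rfl fun c _ => by unfold wedge; ring
  refine ⟨fun b x y => ?_, fun a x y => ?_, fun a b x y z => ?_, fun a b y => ?_⟩
  · rw [sum_congr rfl fun a _ => by rw [hRA]]
    refine sum_mul_sum_mul_eq_zero_of_coeff _ fun c => ?_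
    convert sum_mul_add_mul_eq_zero hkUk (hV2 c) (k b * al c - Vt c b) (k b) using 3
    ring
  · rw [sum_congr rfl fun b _ => by rw [hRA]]
    refine sum_mul_sum_mul_eq_zero_of_coeff _ fun c => ?_
    convert sum_mul_add_mul_eq_zero hkUk (hV2 c) (k a * al c + Vt c a) (-k a) using 3
    ring
  · simp only [hRA, mul_sum, ← sum_add_distrib]
    refine sum_eq_zero fun c _ => ?_
    linear_combination (k a * k b * al c + (Vt c a * k b - Vt c b * k a)) *
      cyclic_mul_wedge_self (θ c) k x y z
  · rw [sum_congr rfl fun x _ => by rw [hRA]]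
    exact sum_mul_sum_mul_eq_zero_of_form _ fun c => sum_mul_wedge_eq_zero (hθk c) hkUk y

/-- For the curvature 2-form `R_{ab} = k_a k_b α_c θ̃^c∧k♭ + 2V_{c[a}k_{b]} θ̃^c∧k♭`,
all contractions with `k` vanish: `k^a R_{ab} = 0`, `k^b R_{ab} = 0`, and moreover
`k♭ ∧ R_{ab} = 0` and `R_{ab}(k,·) = 0` (both generalized Lichnerowicz conditions).
(`R a b x y` denotes the `(x,y)` 2-form component of `R_{ab}`.) -/
theorem stmt_18 {n : ℕ} (g ginv : Fin n → Fin n → ℝ)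
    (hgs : ∀ a b, g a b = g b a)
    (hinv : ∀ a b, ∑ c, g a c * ginv c b = if a = b then 1 else 0)
    (k l : Fin n → ℝ)
    (hkk : ∑ a, ∑ b, ginv a b * k a * k b = 0)
    (hll : ∑ a, ∑ b, ginv a b * l a * l b = 0)
    (hkl : ∑ a, ∑ b, ginv a b * k a * l b = 1)
    (kU lU : Fin n → ℝ)
    (hkU : ∀ a, kU a = ∑ b, ginv a b * k b)
    (hlU : ∀ a, lU a = ∑ b, ginv a b * l b)
    (θ : Fin n → Fin n → ℝ)                    -- transversal coframe θ̃^c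
    (hθk : ∀ c, ∑ a, kU a * θ c a = 0)
    (hθl : ∀ c, ∑ a, lU a * θ c a = 0)
    (hkθ : ∀ x, ∑ c, k c * θ c x = 0)          -- k_c θ̃^c = 0
    (al : Fin n → ℝ) (hal : ∑ c, kU c * al c = 0)   -- α_c, k^c α_c = 0
    (Vt : Fin n → Fin n → ℝ)                   -- V_{ca}, transversal
    (hV1 : ∀ a, ∑ c, kU c * Vt c a = 0) (hV2 : ∀ a, ∑ c, kU c * Vt a c = 0)
    (hV3 : ∀ a, ∑ c, lU c * Vt c a = 0) (hV4 : ∀ a, ∑ c, lU c * Vt a c = 0)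
    (R : Fin n → Fin n → Fin n → Fin n → ℝ)
    (hR : ∀ a b x y, R a b x y =
      k a * k b * ∑ c, al c * (θ c x * k y - θ c y * k x) +
      ∑ c, (Vt c a * k b - Vt c b * k a) * (θ c x * k y - θ c y * k x)) :
    (∀ b x y, ∑ a, kU a * R a b x y = 0) ∧
    (∀ a x y, ∑ b, kU b * R a b x y = 0) ∧
    (∀ a b x y z, k x * R a b y z + k y * R a b z x + k z * R a b x y = 0) ∧
    (∀ a b y, ∑ x, kU x * R a b x y = 0) :=
  stmt_18_general ginv k hkk kU hkU θ hθk al Vt hV2 R hR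
end

section
/- For the curvature R_{ab} = k_a k_b α_c θ̃^c ∧ k♭ + 2 V_{c[a} k_{b]} θ̃^c ∧ k♭ of the restricted connection, the traces satisfy: the (0,4) component tensor obeys R_{acb}{}^c = V k_a k_b and R_{ac}{}^c{}_b = -V k_a k_b where V = V_c{}^c, while R_{abc}{}^c = 0 and the double trace R_{ab}{}^{ab} = 0. -/
/-!
Raising `k` gives a vector `k♯ = g k`, and each trace of the curvature splits into pairings
`v · g u` of `k`, `α` and the rows and columns of `V`. Every such pairing vanishes because `k` is
null and `α`, `V` are transversal (they annihilate `k♯`), except the pairing of `g` with `V`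
itself, which produces `V k_a k_b`. The double trace is then `V g(k, k) = 0`. In the null frame
of the statement `k♯` is the basis vector with index `1`, so transversality is the vanishing of
the components with index `1`.
-/

open Matrix

theorem Matrix.IsSymm.dotProduct_mulVec_comm {ι : Type*} [Fintype ι] {g : Matrix ι ι ℝ}
    (hg : g.IsSymm) (u v : ι → ℝ) : v ⬝ᵥ (g *ᵥ u) = u ⬝ᵥ (g *ᵥ v) := by
  rw [dotProduct_mulVec, ← mulVec_transpose, hg, dotProduct_comm]

namespace NullCurvature

variable {ι : Type*} [Fintype ι]

/-- `curvature k α W a b x y` is the component `R_{xyab}` of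
`R_{ab} = k_a k_b α_c θ̃^c ∧ k♭ + 2 V_{c[a} k_{b]} θ̃^c ∧ k♭` once the coframe `θ̃^c` has been
contracted away. -/
def curvature (k α : ι → ℝ) (W : Matrix ι ι ℝ) (a b x y : ι) : ℝ :=
  k a * k b * (α x * k y - α y * k x) +
    ((W x a * k b - W x b * k a) * k y - (W y a * k b - W y b * k a) * k x)

theorem sum_sum_mul_mul_eq_dotProduct_mulVec (g : Matrix ι ι ℝ) (u v : ι → ℝ) :
    ∑ c, ∑ d, g c d * (u d * v c) = v ⬝ᵥ (g *ᵥ u) := by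
  simp only [dotProduct, mulVec, Finset.mul_sum]
  exact Finset.sum_congr rfl fun c _ => Finset.sum_congr rfl fun d _ => by ring

structure NullTransversal (g : Matrix ι ι ℝ) (k α : ι → ℝ) (W : Matrix ι ι ℝ) : Prop where
  isSymm : g.IsSymm
  null : k ⬝ᵥ (g *ᵥ k) = 0
  dotProduct_eq_zero : α ⬝ᵥ (g *ᵥ k) = 0
  mulVec_eq_zero : W *ᵥ (g *ᵥ k) = 0
  vecMul_eq_zero : (g *ᵥ k) ᵥ* W = 0

namespace NullTransversal

variable {g : Matrix ι ι ℝ} {k α : ι → ℝ} {W : Matrix ι ι ℝ}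

theorem row_dotProduct_eq_zero (h : NullTransversal g k α W) (a : ι) :
    W a ⬝ᵥ (g *ᵥ k) = 0 :=
  congrFun h.mulVec_eq_zero a

theorem dotProduct_row_eq_zero (h : NullTransversal g k α W) (a : ι) :
    k ⬝ᵥ (g *ᵥ W a) = 0 := by
  rw [h.isSymm.dotProduct_mulVec_comm]; exact h.row_dotProduct_eq_zero a

theorem col_dotProduct_eq_zero (h : NullTransversal g k α W) (b : ι) :
    (fun c => W c b) ⬝ᵥ (g *ᵥ k) = 0 := by
  rw [dotProduct_comm]; exact congrFun h.vecMul_eq_zero b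

theorem curvature_ricci_trace (h : NullTransversal g k α W) (a b : ι) :
    ∑ c, ∑ d, g c d * curvature k α W b d a c = (∑ c, ∑ d, g c d * W c d) * k a * k b := by
  calc ∑ c, ∑ d, g c d * curvature k α W b d a c
      = (k b * α a + W a b) * ∑ c, ∑ d, g c d * (k d * k c)
        - k b * k a * ∑ c, ∑ d, g c d * (k d * α c)
        - k b * ∑ c, ∑ d, g c d * (W a d * k c)
        - k a * ∑ c, ∑ d, g c d * (k d * W c b)
        + k a * k b * ∑ c, ∑ d, g c d * W c d := by
        simp only [Finset.mul_sum, ← Finset.sum_sub_distrib, ← Finset.sum_add_distrib]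
        exact Finset.sum_congr rfl fun c _ => Finset.sum_congr rfl fun d _ => by
          unfold curvature; ring
    _ = (∑ c, ∑ d, g c d * W c d) * k a * k b := by
        simp only [sum_sum_mul_mul_eq_dotProduct_mulVec, h.null, h.dotProduct_eq_zero,
          h.dotProduct_row_eq_zero, h.col_dotProduct_eq_zero]
        ring

theorem curvature_ricci_trace_swap (h : NullTransversal g k α W) (a b : ι) :
    ∑ c, ∑ d, g c d * curvature k α W d b a c = -((∑ c, ∑ d, g c d * W c d) * k a * k b) := by
  calc ∑ c, ∑ d, g c d * curvature k α W d b a c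
      = (k b * α a - W a b) * ∑ c, ∑ d, g c d * (k d * k c)
        - k b * k a * ∑ c, ∑ d, g c d * (k d * α c)
        + k b * ∑ c, ∑ d, g c d * (W a d * k c)
        + k a * ∑ c, ∑ d, g c d * (k d * W c b)
        - k a * k b * ∑ c, ∑ d, g c d * W c d := by
        simp only [Finset.mul_sum, ← Finset.sum_sub_distrib, ← Finset.sum_add_distrib]
        exact Finset.sum_congr rfl fun c _ => Finset.sum_congr rfl fun d _ => by
          unfold curvature; ring
    _ = -((∑ c, ∑ d, g c d * W c d) * k a * k b) := by
        simp only [sum_sum_mul_mul_eq_dotProduct_mulVec, h.null, h.dotProduct_eq_zero,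
          h.dotProduct_row_eq_zero, h.col_dotProduct_eq_zero]
        ring

theorem curvature_form_trace (h : NullTransversal g k α W) (a b : ι) :
    ∑ c, ∑ d, g c d * curvature k α W c d a b = 0 := by
  calc ∑ c, ∑ d, g c d * curvature k α W c d a b
      = (α a * k b - α b * k a) * ∑ c, ∑ d, g c d * (k d * k c)
        + k b * ∑ c, ∑ d, g c d * (k d * W a c)
        - k b * ∑ c, ∑ d, g c d * (W a d * k c)
        - k a * ∑ c, ∑ d, g c d * (k d * W b c)
        + k a * ∑ c, ∑ d, g c d * (W b d * k c) := by
        simp only [Finset.mul_sum, ← Finset.sum_sub_distrib, ← Finset.sum_add_distrib]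
        exact Finset.sum_congr rfl fun c _ => Finset.sum_congr rfl fun d _ => by
          unfold curvature; ring
    _ = 0 := by
        simp only [sum_sum_mul_mul_eq_dotProduct_mulVec, h.null, h.row_dotProduct_eq_zero,
          h.dotProduct_row_eq_zero]
        ring

theorem curvature_double_trace (h : NullTransversal g k α W) :
    ∑ a, ∑ b, ∑ c, ∑ d, g a c * g b d * curvature k α W c d a b = 0 := by
  calc ∑ a, ∑ b, ∑ c, ∑ d, g a c * g b d * curvature k α W c d a b
      = ∑ a, ∑ c, g a c * ∑ b, ∑ d, g b d * curvature k α W c d a b := by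
        simp only [Finset.mul_sum, mul_assoc]
        exact Finset.sum_congr rfl fun a _ => Finset.sum_comm
    _ = (∑ c, ∑ d, g c d * W c d) * ∑ a, ∑ c, g a c * (k c * k a) := by
        simp only [h.curvature_ricci_trace, Finset.mul_sum]
        exact Finset.sum_congr rfl fun a _ => Finset.sum_congr rfl fun c _ => by ring
    _ = 0 := by rw [sum_sum_mul_mul_eq_dotProduct_mulVec, h.null, mul_zero]

end NullTransversal

section Gauge

variable {n : ℕ}

theorem sum_mul_coframe {θ : Fin (n + 2) → Fin (n + 2) → ℝ}
    (hθ : ∀ c x, θ c x = if c = x ∧ 2 ≤ (c : ℕ) then 1 else 0) {f : Fin (n + 2) → ℝ}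
    (hf : ∀ c : Fin (n + 2), (c : ℕ) < 2 → f c = 0) (z : Fin (n + 2)) :
    ∑ c, f c * θ c z = f z := by
  rw [Finset.sum_eq_single z (fun c _ hcz => by simp [hθ, hcz]) (by simp)]
  by_cases hz : 2 ≤ (z : ℕ)
  · simp [hθ, hz]
  · simp [hθ, hz, hf z (by omega)]

theorem sum_mul_coframe_wedge {θ : Fin (n + 2) → Fin (n + 2) → ℝ}
    (hθ : ∀ c x, θ c x = if c = x ∧ 2 ≤ (c : ℕ) then 1 else 0) {f : Fin (n + 2) → ℝ}
    (hf : ∀ c : Fin (n + 2), (c : ℕ) < 2 → f c = 0) (k : Fin (n + 2) → ℝ) (x y : Fin (n + 2)) :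
    ∑ c, f c * (θ c x * k y - θ c y * k x) = f x * k y - f y * k x := by
  simp only [mul_sub, ← mul_assoc, Finset.sum_sub_distrib, ← Finset.sum_mul,
    sum_mul_coframe hθ hf]

def gaugeMetric (n : ℕ) : Matrix (Fin (n + 2)) (Fin (n + 2)) ℝ :=
  of fun a b =>
    if a = 0 then (if b = 1 then 1 else 0)
    else if a = 1 then (if b = 0 then 1 else 0)
    else (if b = a then -1 else 0)

theorem gaugeMetric_isSymm : (gaugeMetric n).IsSymm := by
  refine IsSymm.ext fun a b => ?_
  unfold gaugeMetric
  rw [of_apply, of_apply]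
  split_ifs <;> subst_vars <;> simp_all

theorem gaugeMetric_mulVec_single_zero :
    gaugeMetric n *ᵥ Pi.single 0 1 = Pi.single 1 1 := by
  ext c
  rw [mulVec_single_one]
  by_cases h0 : c = 0
  · simp [gaugeMetric, h0]
  · by_cases h1 : c = 1 <;> simp [gaugeMetric, h0, h1, Ne.symm h0]

theorem nullTransversal_gaugeMetric {α : Fin (n + 2) → ℝ}
    {W : Matrix (Fin (n + 2)) (Fin (n + 2)) ℝ}
    (hα : α 1 = 0) (hW₁ : ∀ a, W 1 a = 0) (hW₂ : ∀ a, W a 1 = 0) :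
    NullTransversal (gaugeMetric n) (Pi.single 0 1) α W where
  isSymm := gaugeMetric_isSymm
  null := by rw [gaugeMetric_mulVec_single_zero]; simp
  dotProduct_eq_zero := by rw [gaugeMetric_mulVec_single_zero]; simp [hα]
  mulVec_eq_zero := by ext a; rw [gaugeMetric_mulVec_single_zero]; simp [hW₂]
  vecMul_eq_zero := by ext a; rw [gaugeMetric_mulVec_single_zero]; simp [hW₁]

end Gauge

end NullCurvature

open NullCurvature

theorem stmt_19_general {n : ℕ}
    (ga : Fin (n + 2) → Fin (n + 2) → ℝ)
    (hga : ∀ a b, ga a b =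
      if a = 0 then (if b = 1 then 1 else 0)
      else if a = 1 then (if b = 0 then 1 else 0)
      else (if b = a then -1 else 0))
    (k : Fin (n + 2) → ℝ)
    (hk : ∀ a, k a = if a = 0 then 1 else 0)
    (θ : Fin (n + 2) → Fin (n + 2) → ℝ)
    (hθ : ∀ c x, θ c x = if c = x ∧ 2 ≤ (c : ℕ) then 1 else 0)
    (al : Fin (n + 2) → ℝ) (hal : ∀ c : Fin (n + 2), (c : ℕ) < 2 → al c = 0)
    (Vt : Fin (n + 2) → Fin (n + 2) → ℝ)
    (hVt : ∀ c a : Fin (n + 2), ((c : ℕ) < 2 ∨ (a : ℕ) < 2) → Vt c a = 0)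
    (V : ℝ) (hV : V = ∑ c, ∑ d, ga c d * Vt c d)
    (R : Fin (n + 2) → Fin (n + 2) → Fin (n + 2) → Fin (n + 2) → ℝ)
    (hR : ∀ a b x y, R a b x y =
      k a * k b * ∑ c, al c * (θ c x * k y - θ c y * k x) +
      ∑ c, (Vt c a * k b - Vt c b * k a) * (θ c x * k y - θ c y * k x)) :
    (∀ a b, ∑ c, ∑ d, ga c d * R b d a c = V * k a * k b) ∧
    (∀ a b, ∑ c, ∑ d, ga c d * R d b a c = -(V * k a * k b)) ∧
    (∀ a b, ∑ c, ∑ d, ga c d * R c d a b = 0) ∧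
    (∑ a, ∑ b, ∑ c, ∑ d, ga a c * ga b d * R c d a b = 0) := by
  have hR' : R = curvature k al Vt := by
    funext a b x y
    have hVt_col : ∀ c : Fin (n + 2), (c : ℕ) < 2 → Vt c a * k b - Vt c b * k a = 0 :=
      fun c hc => by rw [hVt c a (Or.inl hc), hVt c b (Or.inl hc)]; ring
    rw [hR, sum_mul_coframe_wedge hθ hal, sum_mul_coframe_wedge hθ hVt_col]
    rfl
  obtain rfl : ga = gaugeMetric n := Matrix.ext hga
  obtain rfl : k = Pi.single 0 1 := funext fun a => by rw [hk, Pi.single_apply]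
  have h : NullTransversal (gaugeMetric n) (Pi.single 0 1) al Vt :=
    nullTransversal_gaugeMetric (hal 1 (by simp)) (fun a => hVt 1 a (Or.inl (by simp)))
      (fun a => hVt a 1 (Or.inr (by simp)))
  subst hV hR'
  exact ⟨h.curvature_ricci_trace, h.curvature_ricci_trace_swap,
    h.curvature_form_trace, h.curvature_double_trace⟩

/-- Traces of the curvature `R_{ab} = k_a k_b α_c θ̃^c∧k♭ + 2V_{c[a}k_{b]} θ̃^c∧k♭`
of the restricted connection, in the gauge basis (anholonomic metric `ga`, its own
inverse): writing `R a b x y` for the component `R_{x y a b}` (first two indices the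
2-form indices), one has `R_{acb}{}^c = V k_a k_b`, `R_{ac}{}^c{}_b = -V k_a k_b`
with `V = V_c{}^c`, while `R_{abc}{}^c = 0` and `R_{ab}{}^{ab} = 0`. -/
theorem stmt_19 {n : ℕ}
    (ga : Fin (n + 2) → Fin (n + 2) → ℝ)
    (hga : ∀ a b, ga a b =
      if a = 0 then (if b = 1 then 1 else 0)
      else if a = 1 then (if b = 0 then 1 else 0)
      else (if b = a then -1 else 0))
    (k l : Fin (n + 2) → ℝ)
    (hk : ∀ a, k a = if a = 0 then 1 else 0)
    (hl : ∀ a, l a = if a = 1 then 1 else 0)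
    (θ : Fin (n + 2) → Fin (n + 2) → ℝ)
    (hθ : ∀ c x, θ c x = if c = x ∧ 2 ≤ (c : ℕ) then 1 else 0)
    (al : Fin (n + 2) → ℝ) (hal : ∀ c : Fin (n + 2), (c : ℕ) < 2 → al c = 0)
    (Vt : Fin (n + 2) → Fin (n + 2) → ℝ)
    (hVt : ∀ c a : Fin (n + 2), ((c : ℕ) < 2 ∨ (a : ℕ) < 2) → Vt c a = 0)
    (V : ℝ) (hV : V = ∑ c, ∑ d, ga c d * Vt c d)
    (R : Fin (n + 2) → Fin (n + 2) → Fin (n + 2) → Fin (n + 2) → ℝ)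
    (hR : ∀ a b x y, R a b x y =
      k a * k b * ∑ c, al c * (θ c x * k y - θ c y * k x) +
      ∑ c, (Vt c a * k b - Vt c b * k a) * (θ c x * k y - θ c y * k x)) :
    (∀ a b, ∑ c, ∑ d, ga c d * R b d a c = V * k a * k b) ∧
    (∀ a b, ∑ c, ∑ d, ga c d * R d b a c = -(V * k a * k b)) ∧
    (∀ a b, ∑ c, ∑ d, ga c d * R c d a b = 0) ∧
    (∑ a, ∑ b, ∑ c, ∑ d, ga a c * ga b d * R c d a b = 0) :=
  stmt_19_general ga hga k hk θ hθ al hal Vt hVt V hV R hR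
end
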